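/- arXiv:1807.02440 — 8 statements merged into one kernel-verified Lean document; each statement's English description precedes it below -/
import Mathlib

section
/- Let (g, [·,·], α, ρ) be the sections model of a Hom-Lie algebroid of Definition-1.3 type over (R, σ). Then for every s ≥ 0 and every k, α^* ∘ d^s = d^s ∘ α^* as maps C^k(g;R) → C^{k+1}(g;R). -/
open Finset

variable {R : Type*} [CommRing R] [Algebra ℝ R]
variable {g : Type*} [AddCommGroup g] [Module ℝ g] [Module R g] [IsScalarTower ℝ R g]

/-- A raw `k`-cochain `η : gᵏ → R` is alternating and ℝ-multilinear,
i.e. it is a member of `C^k(g;R)`. -/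
def IsAltML {k : ℕ} (η : (Fin k → g) → R) : Prop :=
  (∀ (X : Fin k → g) (i : Fin k) (a b : g),
      η (Function.update X i (a + b)) = η (Function.update X i a) + η (Function.update X i b)) ∧
  (∀ (X : Fin k → g) (i : Fin k) (r : ℝ) (a : g),
      η (Function.update X i (r • a)) = r • η (Function.update X i a)) ∧
  (∀ (X : Fin k → g) (i j : Fin k), i ≠ j → X i = X j → η X = 0)

/-- A raw `k`-cochain is `R`-multilinear (in every slot). -/
def IsRLinear {k : ℕ} (η : (Fin k → g) → R) : Prop :=
  ∀ (X : Fin k → g) (i : Fin k) (f : R) (Y : g),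
    η (Function.update X i (f • Y)) = f * η (Function.update X i Y)

/-- The map `α^*` on cochains: `α^*(η)(X₁,…,X_k) = σ(η(α(X₁),…,α(X_k)))`. -/
def alphaStar (σ : R → R) (α : g → g) {k : ℕ} (η : (Fin k → g) → R) : (Fin k → g) → R :=
  fun X => σ (η fun i => α (X i))

/-- The map `σ̄` on cochains: `σ̄(η) = σ ∘ η`. -/
def sigmaBar (σ : R → R) {k : ℕ} (η : (Fin k → g) → R) : (Fin k → g) → R :=
  fun X => σ (η X)

/-- Wedge product of raw cochains, via the sum over `(k,l)`-shuffles. -/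
noncomputable def wedge {k l : ℕ} (η₁ : (Fin k → g) → R) (η₂ : (Fin l → g) → R) :
    (Fin (k + l) → g) → R :=
  fun X => ∑ τ : Equiv.Perm (Fin (k + l)),
    if (∀ a b : Fin k, a < b → τ (Fin.castAdd l a) < τ (Fin.castAdd l b)) ∧
        (∀ a b : Fin l, a < b → τ (Fin.natAdd k a) < τ (Fin.natAdd k b)) then
      ((Equiv.Perm.sign τ : ℤ)) •
        (η₁ (fun i => X (τ (Fin.castAdd l i))) * η₂ (fun i => X (τ (Fin.natAdd k i))))
    else 0

/-- Reindexing a cochain along an equality of arities. -/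
def reind {m n : ℕ} (h : m = n) (η : (Fin m → g) → R) : (Fin n → g) → R :=
  fun X => η fun i => X (Fin.cast h i)

/-- The coboundary operators `d^s : C^k(g;R) → C^{k+1}(g;R)`:
`d^sη(X₁,…,X_{k+1}) = Σᵢ (−1)^{i+1} σ^{k+1+s}(ρ(Xᵢ)(σ^{k+2+s}(η(α(X₁),…,X̂ᵢ,…,α(X_{k+1})))))
  + Σ_{i<j} (−1)^{i+j} η([Xᵢ,Xⱼ],α(X₁),…,X̂ᵢ,…,X̂ⱼ,…,α(X_{k+1}))`,
where `σ^{k+2+s}` stands for the inverse power `σ^{−k−2−s}`, since `σ² = id`. -/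
def dCoch (σ : R → R) (ρ : g → R → R) (br : g → g → g) (α : g → g) (s : ℕ) :
    (k : ℕ) → ((Fin k → g) → R) → ((Fin (k + 1) → g) → R)
  | 0 => fun η X => σ^[1 + s] (ρ (X 0) (σ^[2 + s] (η fun i => i.elim0)))
  | m + 1 => fun η X =>
      (∑ i : Fin (m + 2), ((-1 : ℤ) ^ (i : ℕ)) •
          σ^[m + 2 + s] (ρ (X i) (σ^[m + 3 + s] (η fun l => α (X (i.succAbove l))))))
        + ∑ j : Fin (m + 2), ∑ i : Fin (m + 1),
            if (i : ℕ) < (j : ℕ) then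
              ((-1 : ℤ) ^ ((i : ℕ) + (j : ℕ))) •
                η (Fin.cons (br (X i.castSucc) (X j))
                    fun l => α (X (j.succAbove (i.succAbove l))))
            else 0

/-- The sections model of a Hom-Lie algebroid of Definition-1.3 type
(Laurent-Gengoux–Teles) over `(R, σ)`. -/
structure HomLieAlgebroid13 (R : Type*) [CommRing R] [Algebra ℝ R] (σ : R →ₐ[ℝ] R)
    (g : Type*) [AddCommGroup g] [Module ℝ g] [Module R g] [IsScalarTower ℝ R g] where
  bracket : g → g → g
  α : g →ₗ[ℝ] g
  ρ : g → R →ₗ[ℝ] R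
  σ_invol : ∀ f : R, σ (σ f) = f
  bracket_skew : ∀ X Y, bracket X Y = - bracket Y X
  bracket_add_left : ∀ X Y Z, bracket (X + Y) Z = bracket X Z + bracket Y Z
  bracket_smul_left : ∀ (r : ℝ) (X Y : g), bracket (r • X) Y = r • bracket X Y
  α_smul : ∀ (f : R) (X : g), α (f • X) = σ f • α X
  ρ_add : ∀ (X Y : g) (h : R), ρ (X + Y) h = ρ X h + ρ Y h
  ρ_smul : ∀ (f : R) (X : g) (h : R), ρ (f • X) h = σ f * ρ X h
  ρ_leibniz : ∀ (X : g) (f h : R), ρ X (f * h) = σ f * ρ X h + σ h * ρ X f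
  α_bracket : ∀ X Y, α (bracket X Y) = bracket (α X) (α Y)
  hom_jacobi : ∀ X Y Z,
      bracket (α X) (bracket Y Z) + bracket (α Y) (bracket Z X) + bracket (α Z) (bracket X Y) = 0
  hom_leibniz : ∀ (X : g) (f : R) (Y : g),
      bracket X (f • Y) = σ f • bracket X Y + ρ X f • α Y
  ρ_α_σ : ∀ (X : g) (f : R), ρ (α X) (σ f) = σ (ρ X f)
  ρ_bracket : ∀ (X Y : g) (f : R),
      ρ (bracket X Y) (σ f) = ρ (α X) (ρ Y f) - ρ (α Y) (ρ X f)

set_option linter.unusedSectionVars false in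
lemma sig_iter_comm (σ : R → R) (n : ℕ) (x : R) : σ (σ^[n] x) = σ^[n] (σ x) :=
  (Function.iterate_succ_apply' σ n x).symm.trans (Function.iterate_succ_apply σ n x)

lemma sigma_rho_alpha {σ : R →ₐ[ℝ] R} (A : HomLieAlgebroid13 R σ g) (X : g) (u : R) :
    σ (A.ρ (A.α X) u) = A.ρ X (σ u) := by
  have h := A.ρ_α_σ X (σ u)
  rw [A.σ_invol] at h
  rw [h, A.σ_invol]

/-- `α^* ∘ d^s = d^s ∘ α^*` on a Definition-1.3 Hom-Lie algebroid. -/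
theorem stmt1 (σ : R →ₐ[ℝ] R) (A : HomLieAlgebroid13 R σ g) (s k : ℕ)
    (η : (Fin k → g) → R) (hη : IsAltML η) :
    alphaStar ⇑σ ⇑A.α (dCoch ⇑σ (fun X f => A.ρ X f) A.bracket ⇑A.α s k η) =
      dCoch ⇑σ (fun X f => A.ρ X f) A.bracket ⇑A.α s k (alphaStar ⇑σ ⇑A.α η) := by
  funext X
  cases k with
  | zero =>
    simp only [alphaStar, dCoch]
    have harg : (fun i : Fin 0 => A.α (Fin.elim0 i)) = (fun i : Fin 0 => Fin.elim0 i) := by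
      funext i; exact i.elim0
    rw [harg]
    rw [sig_iter_comm ⇑σ, sigma_rho_alpha, sig_iter_comm ⇑σ]
  | succ m =>
    simp only [alphaStar, dCoch]
    rw [map_add, map_sum, map_sum]
    congr 1
    · refine Finset.sum_congr rfl fun i _ => ?_
      rw [map_zsmul, sig_iter_comm ⇑σ, sigma_rho_alpha, sig_iter_comm ⇑σ]
    · refine Finset.sum_congr rfl fun j _ => ?_
      rw [map_sum]
      refine Finset.sum_congr rfl fun i _ => ?_
      rw [apply_ite σ, map_zero]
      by_cases hij : (i : ℕ) < (j : ℕ)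
      · rw [if_pos hij, if_pos hij, map_zsmul]
        have harg : (Fin.cons (A.bracket (A.α (X i.castSucc)) (A.α (X j)))
              fun l => A.α (A.α (X (j.succAbove (i.succAbove l)))))
            = fun l => A.α ((Fin.cons (A.bracket (X i.castSucc) (X j))
                (fun l => A.α (X (j.succAbove (i.succAbove l)))) : Fin (m + 1) → g) l) := by
          funext l
          refine Fin.cases ?_ (fun l => ?_) l
          · simp [A.α_bracket]
          · simp
        rw [harg]
      · rw [if_neg hij, if_neg hij]
end

section
/- (Necessity part (v) of the equivalence theorem for Definition-1.3 Hom-Lie algebroids.) Let (g, [·,·], α, ρ) be the sections model of a Hom-Lie algebroid of Definition-1.3 type over (R, σ). Then for every R-linear 1-cochain ξ ∈ C^1(g;R), every f ∈ R and all X₁, X₂ ∈ g: d^0ξ(f•X₁, X₂) = σ(f)·d^0ξ(X₁, X₂), where d^0ξ(X,Y) = ρ(X)(σ(ξ(α(Y)))) − ρ(Y)(σ(ξ(α(X)))) − ξ([X,Y]). -/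
open Finset

variable {R : Type*} [CommRing R] [Algebra ℝ R]
variable {g : Type*} [AddCommGroup g] [Module ℝ g] [Module R g] [IsScalarTower ℝ R g]

/-- necessity (v) for Definition-1.3: for an `R`-linear 1-cochain `ξ`,
`d⁰ξ(f•X₁,X₂) = σ(f)·d⁰ξ(X₁,X₂)`, where
`d⁰ξ(X,Y) = ρ(X)(σ(ξ(α(Y)))) − ρ(Y)(σ(ξ(α(X)))) − ξ([X,Y])`. -/
theorem stmt7 (σ : R →ₐ[ℝ] R) (A : HomLieAlgebroid13 R σ g)
    (ξ : g →ₗ[ℝ] R) (hξ : ∀ (f : R) (X : g), ξ (f • X) = f * ξ X)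
    (f : R) (X₁ X₂ : g) :
    A.ρ (f • X₁) (σ (ξ (A.α X₂))) - A.ρ X₂ (σ (ξ (A.α (f • X₁))))
        - ξ (A.bracket (f • X₁) X₂) =
      σ f * (A.ρ X₁ (σ (ξ (A.α X₂))) - A.ρ X₂ (σ (ξ (A.α X₁)))
        - ξ (A.bracket X₁ X₂)) := by
  have h1 : A.ρ (f • X₁) (σ (ξ (A.α X₂))) = σ f * A.ρ X₁ (σ (ξ (A.α X₂))) :=
    A.ρ_smul f X₁ _
  have h2 : σ (ξ (A.α (f • X₁))) = f * σ (ξ (A.α X₁)) := by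
    rw [A.α_smul, hξ, map_mul, A.σ_invol]
  have h3 : A.ρ X₂ (σ (ξ (A.α (f • X₁)))) =
      σ f * A.ρ X₂ (σ (ξ (A.α X₁))) + ξ (A.α X₁) * A.ρ X₂ f := by
    rw [h2, A.ρ_leibniz, A.σ_invol]
  have h4 : A.bracket (f • X₁) X₂ =
      σ f • A.bracket X₁ X₂ - A.ρ X₂ f • A.α X₁ := by
    rw [A.bracket_skew, A.hom_leibniz, A.bracket_skew X₂ X₁]
    module
  have h5 : ξ (A.bracket (f • X₁) X₂) =
      σ f * ξ (A.bracket X₁ X₂) - A.ρ X₂ f * ξ (A.α X₁) := by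
    rw [h4, map_sub, hξ, hξ]
  rw [h1, h3, h5]; ring
end

section
/- (Necessity part 5) of the equivalence theorem for Definition-1.4 Hom-Lie algebroids.) Let (g, [·,·], α, ρ) be the sections model of a Hom-Lie algebroid of Definition-1.4 type over (R, σ). Then for every R-linear 1-cochain ξ ∈ C^1(g;R), every f ∈ R and all X₁, X₂ ∈ g: d^1ξ(f•X₁, X₂) = σ(f)·d^1ξ(X₁, X₂), where d^1ξ(X,Y) = σ(ρ(X)(ξ(α(Y)))) − σ(ρ(Y)(ξ(α(X)))) − ξ([X,Y]). -/
open Finset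

variable {R : Type*} [CommRing R] [Algebra ℝ R]
variable {g : Type*} [AddCommGroup g] [Module ℝ g] [Module R g] [IsScalarTower ℝ R g]

/-- The sections model of a Hom-Lie algebroid of Definition-1.4 type
(Cai–Liu–Sheng) over `(R, σ)`. -/
structure HomLieAlgebroid14 (R : Type*) [CommRing R] [Algebra ℝ R] (σ : R →ₐ[ℝ] R)
    (g : Type*) [AddCommGroup g] [Module ℝ g] [Module R g] [IsScalarTower ℝ R g] where
  bracket : g → g → g
  α : g →ₗ[ℝ] g
  ρ : g → R →ₗ[ℝ] R
  σ_invol : ∀ f : R, σ (σ f) = f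
  bracket_skew : ∀ X Y, bracket X Y = - bracket Y X
  bracket_add_left : ∀ X Y Z, bracket (X + Y) Z = bracket X Z + bracket Y Z
  bracket_smul_left : ∀ (r : ℝ) (X Y : g), bracket (r • X) Y = r • bracket X Y
  α_smul : ∀ (f : R) (X : g), α (f • X) = σ f • α X
  ρ_add : ∀ (X Y : g) (h : R), ρ (X + Y) h = ρ X h + ρ Y h
  ρ_smul : ∀ (f : R) (X : g) (h : R), ρ (f • X) h = f * ρ X h
  ρ_leibniz : ∀ (X : g) (f h : R), ρ X (f * h) = σ f * ρ X h + σ h * ρ X f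
  α_bracket : ∀ X Y, α (bracket X Y) = bracket (α X) (α Y)
  hom_jacobi : ∀ X Y Z,
      bracket (α X) (bracket Y Z) + bracket (α Y) (bracket Z X) + bracket (α Z) (bracket X Y) = 0
  hom_leibniz : ∀ (X : g) (f : R) (Y : g),
      bracket X (f • Y) = σ f • bracket X Y + ρ (α X) f • α Y
  ρ_α_σ : ∀ (X : g) (f : R), ρ (α X) (σ f) = σ (ρ X f)
  ρ_bracket : ∀ (X Y : g) (f : R),
      ρ (bracket X Y) (σ f) = ρ (α X) (ρ Y f) - ρ (α Y) (ρ X f)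

/-- Statement 9 (necessity 5) for Definition-1.4): for an `R`-linear 1-cochain `ξ`,
`d¹ξ(f•X₁,X₂) = σ(f)·d¹ξ(X₁,X₂)`, where
`d¹ξ(X,Y) = σ(ρ(X)(ξ(α(Y)))) − σ(ρ(Y)(ξ(α(X)))) − ξ([X,Y])`. -/
theorem stmt9 (σ : R →ₐ[ℝ] R) (B : HomLieAlgebroid14 R σ g)
    (ξ : g →ₗ[ℝ] R) (hξ : ∀ (f : R) (X : g), ξ (f • X) = f * ξ X)
    (f : R) (X₁ X₂ : g) :
    σ (B.ρ (f • X₁) (ξ (B.α X₂))) - σ (B.ρ X₂ (ξ (B.α (f • X₁))))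
        - ξ (B.bracket (f • X₁) X₂) =
      σ f * (σ (B.ρ X₁ (ξ (B.α X₂))) - σ (B.ρ X₂ (ξ (B.α X₁)))
        - ξ (B.bracket X₁ X₂)) := by
  have hbr : B.bracket (f • X₁) X₂
      = σ f • B.bracket X₁ X₂ - B.ρ (B.α X₂) f • B.α X₁ := by
    rw [B.bracket_skew, B.hom_leibniz, B.bracket_skew X₂ X₁]
    module
  have hρσ : B.ρ (B.α X₂) f = σ (B.ρ X₂ (σ f)) := by
    conv_lhs => rw [← B.σ_invol f, B.ρ_α_σ]
  rw [B.ρ_smul, map_mul, B.α_smul, hξ, B.ρ_leibniz, B.σ_invol, hbr, map_sub,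
    hξ, hξ, map_add, map_mul, map_mul, B.σ_invol, ← hρσ]
  ring
end

section
/- (Sufficiency, Step 1 of the equivalence theorem for Definition-1.3 Hom-Lie algebroids.) In the sufficiency setting, the map ρ defined by ρ(X)(f) = σ(d^0f(X)) satisfies: (a) ρ(g•X) = σ(g)·ρ(X) for all g ∈ R and X ∈ g; and (b) ρ(X)(fg) = σ(f)·ρ(X)(g) + σ(g)·ρ(X)(f) for all f, g ∈ R and X ∈ g. -/
open Finset

variable {R : Type*} [CommRing R] [Algebra ℝ R]
variable {g : Type*} [AddCommGroup g] [Module ℝ g] [Module R g] [IsScalarTower ℝ R g]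

/-- The "sufficiency setting": the abstract data of a family of ℝ-linear operators
`d^s : C^k(g;R) → C^{k+1}(g;R)` satisfying conditions (i)–(v) of Theorem 3.3,
together with `σ` and `α`. -/
structure SuffData (R : Type*) [CommRing R] [Algebra ℝ R] (σ : R →ₐ[ℝ] R)
    (g : Type*) [AddCommGroup g] [Module ℝ g] [Module R g] [IsScalarTower ℝ R g] where
  σ_invol : ∀ f : R, σ (σ f) = f
  α : g →ₗ[ℝ] g
  α_smul : ∀ (f : R) (X : g), α (f • X) = σ f • α X
  D : (s k : ℕ) → ((Fin k → g) → R) → ((Fin (k + 1) → g) → R)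
  D_add : ∀ (s k : ℕ) (η₁ η₂ : (Fin k → g) → R), D s k (η₁ + η₂) = D s k η₁ + D s k η₂
  D_smul : ∀ (s k : ℕ) (r : ℝ) (η : (Fin k → g) → R), D s k (r • η) = r • D s k η
  D_alt : ∀ (s k : ℕ) (η : (Fin k → g) → R), IsAltML η → IsAltML (D s k η)
  D_sq : ∀ (s k : ℕ) (η : (Fin k → g) → R), IsAltML η → D s (k + 1) (D s k η) = 0
  D_wedge : ∀ (s k l : ℕ) (η₁ : (Fin k → g) → R) (η₂ : (Fin l → g) → R),
      IsAltML η₁ → IsAltML η₂ →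
      D s (k + l) (wedge η₁ η₂) =
        reind (by omega : k + 1 + l = k + l + 1)
            (wedge (D (s + l) k η₁) (sigmaBar ⇑σ (alphaStar ⇑σ ⇑α η₂)))
          + ((-1 : ℤ) ^ k) •
              reind (by omega : k + (l + 1) = k + l + 1)
                (wedge (sigmaBar ⇑σ (alphaStar ⇑σ ⇑α η₁)) (D (s + k) l η₂))
  D_alphaStar : ∀ (s k : ℕ) (η : (Fin k → g) → R), IsAltML η →
      alphaStar ⇑σ ⇑α (D s k η) = D s k (alphaStar ⇑σ ⇑α η)
  D_sigmaBar : ∀ (s k : ℕ) (η : (Fin k → g) → R), IsAltML η →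
      sigmaBar ⇑σ (D s k η) = D (s + 1) k (sigmaBar ⇑σ η)
  D_iv : ∀ (f h : R) (X : g),
      D 0 0 (fun _ => f) (fun _ => h • X) = h * D 0 0 (fun _ => f) (fun _ => X)
  D_v : ∀ (ξ : (Fin 1 → g) → R), IsAltML ξ → IsRLinear ξ →
      ∀ (f : R) (X₁ X₂ : g), D 0 1 ξ ![f • X₁, X₂] = σ f * D 0 1 ξ ![X₁, X₂]

/-- The anchor defined from the abstract operators: `ρ(X)(f) = σ(d⁰f(X))`. -/
def SuffData.rho {R : Type*} [CommRing R] [Algebra ℝ R] {σ : R →ₐ[ℝ] R}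
    {g : Type*} [AddCommGroup g] [Module ℝ g] [Module R g] [IsScalarTower ℝ R g]
    (S : SuffData R σ g) (X : g) (f : R) : R :=
  σ (S.D 0 0 (fun _ => f) (fun _ => X))


lemma altML_zero_cochain (c : R) :
    IsAltML (g := g) (k := 0) (fun _ => c) :=
  ⟨fun _ i => i.elim0, fun _ i => i.elim0, fun _ i => i.elim0⟩

lemma wedge_small {k l : ℕ} (hk : k + l ≤ 1)
    (η₁ : (Fin k → g) → R) (η₂ : (Fin l → g) → R) :
    wedge η₁ η₂ = fun X =>
      η₁ (fun i => X (Fin.castAdd l i)) * η₂ (fun i => X (Fin.natAdd k i)) := by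
  haveI : Subsingleton (Fin (k + l)) := Fin.subsingleton_iff_le_one.mpr hk
  have hsub : ∀ τ : Equiv.Perm (Fin (k + l)), τ = 1 := by
    intro τ; exact Equiv.ext fun i => Subsingleton.elim _ _
  funext X
  unfold wedge
  rw [Fintype.sum_eq_single (1 : Equiv.Perm (Fin (k + l)))
      (fun τ hτ => absurd (hsub τ) hτ)]
  rw [if_pos]
  · simp
  · constructor
    · intro a b hab
      have := a.isLt; have := b.isLt; omega
    · intro a b hab
      have := a.isLt; have := b.isLt; omega

/-- sufficiency, Step 1 for Definition-1.3: the anchor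
`ρ(X)(f) = σ(d⁰f(X))` satisfies `ρ(g•X) = σ(g)·ρ(X)` and the twisted Leibniz rule. -/
theorem stmt10 (σ : R →ₐ[ℝ] R) (S : SuffData R σ g) :
    (∀ (h : R) (X : g) (f : R), S.rho (h • X) f = σ h * S.rho X f) ∧
    (∀ (X : g) (f h : R), S.rho X (f * h) = σ f * S.rho X h + σ h * S.rho X f) := by
  constructor
  · intro h X f
    simp only [SuffData.rho, S.D_iv f h X, map_mul]
  · intro X f h
    have key : ∀ Y : Fin 1 → g,
        S.D 0 0 (fun _ => f * h) Y
          = S.D 0 0 (fun _ => f) Y * h + f * S.D 0 0 (fun _ => h) Y := by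
      intro Y
      have hw := S.D_wedge 0 0 0 (fun _ => f) (fun _ => h)
        (altML_zero_cochain f) (altML_zero_cochain h)
      have hw00 : wedge (g := g) (k := 0) (l := 0) (fun _ => f) (fun _ => h) = fun _ => f * h := by
        rw [wedge_small (by omega)]
      rw [hw00] at hw
      have := congrFun hw Y
      rw [wedge_small (k := 1) (l := 0) (by omega),
          wedge_small (k := 0) (l := 1) (by omega)] at this
      simp only [reind, Pi.add_apply, Pi.smul_apply, pow_zero, one_smul,
        sigmaBar, alphaStar] at this
      rw [this]
      have e1 : (fun (i : Fin 1) =>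
          Y (Fin.cast (by omega : 0 + 1 + 0 = 0 + 0 + 1) (Fin.castAdd 0 i))) = Y := by
        funext i; congr 1
      have e2 : (fun (i : Fin 1) =>
          Y (Fin.cast (by omega : 0 + (0 + 1) = 0 + 0 + 1) (Fin.natAdd 0 i))) = Y := by
        funext i; congr 1; exact Fin.ext (by simp)
      rw [e1, e2, S.σ_invol, S.σ_invol]
    simp only [SuffData.rho, key (fun _ => X), map_add, map_mul]
    ring
end

section
/- (Sufficiency, equation (s33) of the equivalence theorem for Definition-1.3 Hom-Lie algebroids.) In the sufficiency setting, the map ρ defined by ρ(X)(f) = σ(d^0f(X)) satisfies ρ(α(X)) ∘ σ = σ ∘ ρ(X) for all X ∈ g. -/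
open Finset

variable {R : Type*} [CommRing R] [Algebra ℝ R]
variable {g : Type*} [AddCommGroup g] [Module ℝ g] [Module R g] [IsScalarTower ℝ R g]

/-- sufficiency, equation (s33) for Definition-1.3:
`ρ(α(X)) ∘ σ = σ ∘ ρ(X)`. -/
theorem stmt11 (σ : R →ₐ[ℝ] R) (S : SuffData R σ g) :
    ∀ (X : g) (f : R), S.rho (S.α X) (σ f) = σ (S.rho X f) := by
  intro X f
  have hA : IsAltML (fun _ : Fin 0 → g => σ f) :=
    ⟨fun _ i => i.elim0, fun _ i => i.elim0, fun _ i => i.elim0⟩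
  have h := congrFun (S.D_alphaStar 0 0 (fun _ => σ f) hA) (fun _ => X)
  have h2 : alphaStar ⇑σ ⇑S.α (fun _ : Fin 0 → g => σ f) = (fun _ : Fin 0 → g => f) := by
    funext _; exact S.σ_invol f
  rw [h2] at h
  simp only [alphaStar] at h
  show σ (S.D 0 0 (fun _ => σ f) fun _ => S.α X) = σ (σ (S.D 0 0 (fun _ => f) fun _ => X))
  rw [S.σ_invol]
  exact h
end

section
/- (Sufficiency, equation (s35) of the equivalence theorem for Definition-1.3 Hom-Lie algebroids.) In the sufficiency setting with the bracket assumption, α([X,Y]) = [α(X), α(Y)] for all X, Y ∈ g. -/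
open Finset

variable {R : Type*} [CommRing R] [Algebra ℝ R]
variable {g : Type*} [AddCommGroup g] [Module ℝ g] [Module R g] [IsScalarTower ℝ R g]

private lemma update_fin1 (X : Fin 1 → g) (i : Fin 1) (a : g) :
    Function.update X i a = fun _ => a := by
  funext j
  rw [Subsingleton.elim j i]
  simp

private lemma isAltML_const (f : R) : IsAltML (fun _ : Fin 0 → g => f) :=
  ⟨fun _ i => i.elim0, fun _ i => i.elim0, fun _ i => i.elim0⟩

private lemma rho_alpha {σ : R →ₐ[ℝ] R} (S : SuffData R σ g) (X : g) (f : R) :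
    S.rho (S.α X) f = σ (S.rho X (σ f)) := by
  have h := congrFun (S.D_alphaStar 0 0 (fun _ => f) (isAltML_const f)) (fun _ => X)
  simp only [alphaStar] at h
  unfold SuffData.rho
  rw [S.σ_invol]
  exact h

/-- sufficiency, equation (s35) for Definition-1.3:
`α([X,Y]) = [α(X),α(Y)]`. -/
theorem stmt12 (σ : R →ₐ[ℝ] R) (S : SuffData R σ g)
    (br : g → g → g)
    (hbr_skew : ∀ X Y : g, br X Y = - br Y X)
    (hbr_add_left : ∀ X Y Z : g, br (X + Y) Z = br X Z + br Y Z)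
    (hbr_smul_left : ∀ (r : ℝ) (X Y : g), br (r • X) Y = r • br X Y)
    (hbr_def : ∀ (ξ : (Fin 1 → g) → R), IsAltML ξ → IsRLinear ξ → ∀ X Y : g,
        ξ (fun _ => br X Y) =
          S.rho X (σ (ξ fun _ => S.α Y)) - S.rho Y (σ (ξ fun _ => S.α X)) - S.D 0 1 ξ ![X, Y])
    (hsep : ∀ X : g,
        (∀ (ξ : (Fin 1 → g) → R), IsAltML ξ → IsRLinear ξ → ξ (fun _ => X) = 0) → X = 0) :
    ∀ X Y : g, S.α (br X Y) = br (S.α X) (S.α Y) := by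
  intro X Y
  have hinv := S.σ_invol
  have key : ∀ (ξ : (Fin 1 → g) → R), IsAltML ξ → IsRLinear ξ →
      ξ (fun _ => S.α (br X Y) - br (S.α X) (S.α Y)) = 0 := by
    intro ξ hξa hξr
    have hadd : ∀ a b : g, ξ (fun _ => a + b) = ξ (fun _ => a) + ξ (fun _ => b) := by
      intro a b
      simpa [update_fin1] using hξa.1 (fun _ => a) 0 a b
    have hsmulR : ∀ (r : ℝ) (a : g), ξ (fun _ => r • a) = r • ξ (fun _ => a) := by
      intro r a
      simpa [update_fin1] using hξa.2.1 (fun _ => a) 0 r a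
    have hRlin : ∀ (f : R) (a : g), ξ (fun _ => f • a) = f * ξ (fun _ => a) := by
      intro f a
      simpa [update_fin1] using hξr (fun _ => a) 0 f a
    set η := alphaStar ⇑σ ⇑S.α ξ with hη
    have hηval : ∀ Z : g, η (fun _ => Z) = σ (ξ (fun _ => S.α Z)) := fun Z => rfl
    have hηa : IsAltML η := by
      refine ⟨?_, ?_, ?_⟩
      · intro X' i a b
        simp only [update_fin1, hηval, map_add S.α.toAddMonoidHom]
        simp only [LinearMap.toAddMonoidHom_coe, map_add S.α, hadd, map_add σ]
      · intro X' i r a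
        simp only [update_fin1, hηval, map_smul S.α, hsmulR, map_smul σ]
      · intro X' i j hij _
        exact absurd (Subsingleton.elim i j) hij
    have hηr : IsRLinear η := by
      intro X' i f a
      simp only [update_fin1, hηval, S.α_smul, hRlin, map_mul, hinv]
    have hD := congrFun (S.D_alphaStar 0 1 ξ hξa) ![X, Y]
    have hvec : (fun i => S.α (![X, Y] i)) = ![S.α X, S.α Y] := by
      funext i; fin_cases i <;> simp
    simp only [alphaStar] at hD
    rw [hvec] at hD
    have h1 := hbr_def η hηa hηr X Y
    have h2 := hbr_def ξ hξa hξr (S.α X) (S.α Y)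
    set tY := ξ (fun _ => S.α (S.α Y)) with htY
    set tX := ξ (fun _ => S.α (S.α X)) with htX
    have e1 : ξ (fun _ => S.α (br X Y)) =
        σ (S.rho X tY) - σ (S.rho Y tX) - S.D 0 1 ξ ![S.α X, S.α Y] := by
      have := congrArg σ h1
      rw [hηval, hinv, hηval, hηval, hinv, hinv, map_sub, map_sub, ← hD, hinv] at this
      exact this
    have e2 : ξ (fun _ => br (S.α X) (S.α Y)) =
        σ (S.rho X tY) - σ (S.rho Y tX) - S.D 0 1 ξ ![S.α X, S.α Y] := by
      rw [h2, rho_alpha, rho_alpha, hinv, hinv]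
    have hsub : ξ (fun _ => S.α (br X Y) - br (S.α X) (S.α Y)) =
        ξ (fun _ => S.α (br X Y)) - ξ (fun _ => br (S.α X) (S.α Y)) := by
      have h := hadd (S.α (br X Y)) ((-1 : ℝ) • br (S.α X) (S.α Y))
      rw [hsmulR] at h
      simpa [neg_one_smul, sub_eq_add_neg] using h
    rw [hsub, e1, e2, sub_self]
  have := hsep _ key
  exact sub_eq_zero.mp this
end

section
/- (Sufficiency, equation (s36) of the equivalence theorem for Definition-1.3 Hom-Lie algebroids.) In the sufficiency setting with the bracket assumption, ρ(α(X)) ∘ ρ(Y) − ρ(α(Y)) ∘ ρ(X) = ρ([X,Y]) ∘ σ as endomorphisms of R, for all X, Y ∈ g. -/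
open Finset

variable {R : Type*} [CommRing R] [Algebra ℝ R]
variable {g : Type*} [AddCommGroup g] [Module ℝ g] [Module R g] [IsScalarTower ℝ R g]

/-- sufficiency, equation (s36) for Definition-1.3:
`ρ(α(X)) ∘ ρ(Y) − ρ(α(Y)) ∘ ρ(X) = ρ([X,Y]) ∘ σ`. -/
theorem stmt13 (σ : R →ₐ[ℝ] R) (S : SuffData R σ g)
    (br : g → g → g)
    (hbr_skew : ∀ X Y : g, br X Y = - br Y X)
    (hbr_add_left : ∀ X Y Z : g, br (X + Y) Z = br X Z + br Y Z)
    (hbr_smul_left : ∀ (r : ℝ) (X Y : g), br (r • X) Y = r • br X Y)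
    (hbr_def : ∀ (ξ : (Fin 1 → g) → R), IsAltML ξ → IsRLinear ξ → ∀ X Y : g,
        ξ (fun _ => br X Y) =
          S.rho X (σ (ξ fun _ => S.α Y)) - S.rho Y (σ (ξ fun _ => S.α X)) - S.D 0 1 ξ ![X, Y])
    (hsep : ∀ X : g,
        (∀ (ξ : (Fin 1 → g) → R), IsAltML ξ → IsRLinear ξ → ξ (fun _ => X) = 0) → X = 0) :
    ∀ (X Y : g) (f : R),
      S.rho (S.α X) (S.rho Y f) - S.rho (S.α Y) (S.rho X f) = S.rho (br X Y) (σ f) := by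
  intro X Y f
  have altML0 : ∀ η : (Fin 0 → g) → R, IsAltML η :=
    fun η => ⟨fun _ i => i.elim0, fun _ i => i.elim0, fun _ i => i.elim0⟩
  -- key identity: σ(d⁰(σc)(αZ)) = d⁰c(Z)
  have key : ∀ (c : R) (Z : g),
      σ (S.D 0 0 (fun _ => σ c) (fun _ => S.α Z)) = S.D 0 0 (fun _ => c) (fun _ => Z) := by
    intro c Z
    have h1 := congrFun (S.D_alphaStar 0 0 (fun _ => σ c) (altML0 _)) (fun _ => Z)
    have h2 : alphaStar ⇑σ ⇑S.α (fun _ : Fin 0 → g => σ c) = (fun _ => c) :=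
      funext fun _ => S.σ_invol c
    rw [h2] at h1
    simpa [alphaStar] using h1
  have hAlt : IsAltML (S.D 0 0 (fun _ => σ f)) := S.D_alt 0 0 _ (altML0 _)
  have hLin : IsRLinear (S.D 0 0 (fun _ => σ f)) := by
    intro Xs i c Yv
    haveI : Subsingleton (Fin (0 + 1)) := Fin.subsingleton_one
    have hupd : ∀ v : g, Function.update Xs i v = fun _ => v :=
      fun v => funext fun j => by rw [Subsingleton.elim j i, Function.update_self]
    rw [hupd, hupd]
    exact S.D_iv (σ f) c Yv
  have hzero : S.D 0 1 (S.D 0 0 (fun _ => σ f)) = 0 := S.D_sq 0 0 _ (altML0 _)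
  have hb := hbr_def (S.D 0 0 (fun _ => σ f)) hAlt hLin X Y
  rw [hzero] at hb
  simp only [Pi.zero_apply, sub_zero] at hb
  rw [show σ ((S.D 0 0 fun _ => σ f) fun _ => S.α Y)
        = S.D 0 0 (fun _ => f) (fun _ => Y) from key f Y,
      show σ ((S.D 0 0 fun _ => σ f) fun _ => S.α X)
        = S.D 0 0 (fun _ => f) (fun _ => X) from key f X] at hb
  simp only [SuffData.rho] at hb ⊢
  rw [hb, map_sub, S.σ_invol, S.σ_invol, key, key]
end

section
/- (Sufficiency, equation (s37) of the equivalence theorem for Definition-1.3 Hom-Lie algebroids: Hom-Leibniz identity.) In the sufficiency setting with the bracket assumption, [X, f•Y] = σ(f)•[X,Y] + ρ(X)(f)•α(Y) for all X, Y ∈ g and f ∈ R. -/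
open Finset

variable {R : Type*} [CommRing R] [Algebra ℝ R]
variable {g : Type*} [AddCommGroup g] [Module ℝ g] [Module R g] [IsScalarTower ℝ R g]

section Aux

lemma isAltML_fin0 (η : (Fin 0 → g) → R) : IsAltML η :=
  ⟨fun _ i => i.elim0, fun _ i => i.elim0, fun _ i => i.elim0⟩

lemma upd1 (Xf : Fin 1 → g) (c : g) : Function.update Xf 0 c = fun _ => c := by
  funext i
  rw [Subsingleton.elim i 0, Function.update_self]

lemma alt1_add {ξ : (Fin 1 → g) → R} (hξ : IsAltML ξ) (a b : g) :
    ξ (fun _ => a + b) = ξ (fun _ => a) + ξ (fun _ => b) := by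
  have := hξ.1 (fun _ => a) 0 a b
  simpa [upd1] using this

lemma alt1_smul {ξ : (Fin 1 → g) → R} (hξ : IsAltML ξ) (r : ℝ) (a : g) :
    ξ (fun _ => r • a) = r • ξ (fun _ => a) := by
  have := hξ.2.1 (fun _ => a) 0 r a
  simpa [upd1] using this

lemma alt1_neg {ξ : (Fin 1 → g) → R} (hξ : IsAltML ξ) (a : g) :
    ξ (fun _ => -a) = - ξ (fun _ => a) := by
  have := alt1_smul hξ (-1 : ℝ) a
  simpa [neg_one_smul] using this

lemma alt1_sub {ξ : (Fin 1 → g) → R} (hξ : IsAltML ξ) (a b : g) :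
    ξ (fun _ => a - b) = ξ (fun _ => a) - ξ (fun _ => b) := by
  rw [sub_eq_add_neg, alt1_add hξ, alt1_neg hξ, sub_eq_add_neg]

lemma rlin1 {ξ : (Fin 1 → g) → R} (hξ : IsRLinear ξ) (f : R) (a : g) :
    ξ (fun _ => f • a) = f * ξ (fun _ => a) := by
  have := hξ (fun _ => a) 0 f a
  simpa [upd1] using this

lemma upd2_0 (a b c : g) : Function.update ![a, b] 0 c = ![c, b] := by
  funext i
  fin_cases i <;> simp

lemma upd2_1 (a b c : g) : Function.update ![a, b] 1 c = ![a, c] := by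
  funext i
  fin_cases i <;> simp

lemma alt2_swap {η : (Fin 2 → g) → R} (hη : IsAltML η) (a b : g) :
    η ![a, b] = - η ![b, a] := by
  have add0 : ∀ x y c : g, η ![x + y, c] = η ![x, c] + η ![y, c] := by
    intro x y c
    have := hη.1 ![x, c] 0 x y
    simpa [upd2_0] using this
  have add1 : ∀ c x y : g, η ![c, x + y] = η ![c, x] + η ![c, y] := by
    intro c x y
    have := hη.1 ![c, x] 1 x y
    simpa [upd2_1] using this
  have diag : ∀ x : g, η ![x, x] = 0 := by
    intro x
    exact hη.2.2 ![x, x] 0 1 (by decide) rfl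
  have h := diag (a + b)
  rw [add0, add1, add1, diag, diag] at h
  linear_combination h

lemma fin1_fun_eq (X : Fin 1 → g) (j : Fin 1) : (fun _ : Fin 1 => X j) = X := by
  funext i
  exact congrArg X (Subsingleton.elim j i)

lemma wedge00 (η₁ η₂ : (Fin 0 → g) → R) (X : Fin 0 → g) :
    wedge η₁ η₂ X = η₁ X * η₂ X := by
  unfold wedge
  rw [Fintype.sum_subsingleton _ (1 : Equiv.Perm (Fin 0))]
  have hc : (∀ a b : Fin 0, a < b → (1 : Equiv.Perm (Fin 0)) (Fin.castAdd 0 a) < (1 : Equiv.Perm (Fin 0)) (Fin.castAdd 0 b)) ∧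
      (∀ a b : Fin 0, a < b → (1 : Equiv.Perm (Fin 0)) (Fin.natAdd 0 a) < (1 : Equiv.Perm (Fin 0)) (Fin.natAdd 0 b)) :=
    ⟨fun a => a.elim0, fun a => a.elim0⟩
  rw [if_pos hc]
  have e1 : (fun i : Fin 0 => X ((1 : Equiv.Perm (Fin 0)) (Fin.castAdd 0 i))) = X := by
    funext i; exact i.elim0
  have e2 : (fun i : Fin 0 => X ((1 : Equiv.Perm (Fin 0)) (Fin.natAdd 0 i))) = X := by
    funext i; exact i.elim0
  rw [e1, e2]
  simp

lemma fin1_no_lt (a b : Fin 1) : ¬ a < b := by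
  rw [Subsingleton.elim a b]; exact lt_irrefl b

lemma wedge10 (η₁ : (Fin 1 → g) → R) (η₂ : (Fin 0 → g) → R) (X : Fin (1 + 0) → g)
    (Z : Fin 0 → g) :
    wedge η₁ η₂ X = η₁ (fun _ => X 0) * η₂ Z := by
  unfold wedge
  haveI : Subsingleton (Equiv.Perm (Fin (1 + 0))) :=
    inferInstanceAs (Subsingleton (Equiv.Perm (Fin 1)))
  rw [Fintype.sum_subsingleton _ (1 : Equiv.Perm (Fin (1 + 0)))]
  have hc : (∀ a b : Fin 1, a < b → (1 : Equiv.Perm (Fin (1 + 0))) (Fin.castAdd 0 a) < (1 : Equiv.Perm (Fin (1 + 0))) (Fin.castAdd 0 b)) ∧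
      (∀ a b : Fin 0, a < b → (1 : Equiv.Perm (Fin (1 + 0))) (Fin.natAdd 1 a) < (1 : Equiv.Perm (Fin (1 + 0))) (Fin.natAdd 1 b)) :=
    ⟨fun a b hab => absurd hab (fin1_no_lt a b), fun a => a.elim0⟩
  rw [if_pos hc]
  haveI : Subsingleton (Fin (1 + 0)) := inferInstanceAs (Subsingleton (Fin 1))
  have e1 : (fun i : Fin 1 => X ((1 : Equiv.Perm (Fin (1 + 0))) (Fin.castAdd 0 i))) =
      (fun _ : Fin 1 => X 0) := by
    funext i; exact congrArg X (Subsingleton.elim _ _)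
  have e2 : (fun i : Fin 0 => X ((1 : Equiv.Perm (Fin (1 + 0))) (Fin.natAdd 1 i))) = Z := by
    funext i; exact i.elim0
  rw [e1, e2]
  simp

lemma wedge01 (η₁ : (Fin 0 → g) → R) (η₂ : (Fin 1 → g) → R) (X : Fin (0 + 1) → g)
    (Z : Fin 0 → g) :
    wedge η₁ η₂ X = η₁ Z * η₂ (fun _ => X 0) := by
  unfold wedge
  haveI : Subsingleton (Equiv.Perm (Fin (0 + 1))) :=
    inferInstanceAs (Subsingleton (Equiv.Perm (Fin 1)))
  rw [Fintype.sum_subsingleton _ (1 : Equiv.Perm (Fin (0 + 1)))]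
  have hc : (∀ a b : Fin 0, a < b → (1 : Equiv.Perm (Fin (0 + 1))) (Fin.castAdd 1 a) < (1 : Equiv.Perm (Fin (0 + 1))) (Fin.castAdd 1 b)) ∧
      (∀ a b : Fin 1, a < b → (1 : Equiv.Perm (Fin (0 + 1))) (Fin.natAdd 0 a) < (1 : Equiv.Perm (Fin (0 + 1))) (Fin.natAdd 0 b)) :=
    ⟨fun a => a.elim0, fun a b hab => absurd hab (fin1_no_lt a b)⟩
  rw [if_pos hc]
  have e1 : (fun i : Fin 0 => X ((1 : Equiv.Perm (Fin (0 + 1))) (Fin.castAdd 1 i))) = Z := by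
    funext i; exact i.elim0
  haveI : Subsingleton (Fin (0 + 1)) := inferInstanceAs (Subsingleton (Fin 1))
  have e2 : (fun i : Fin 1 => X ((1 : Equiv.Perm (Fin (0 + 1))) (Fin.natAdd 0 i))) =
      (fun _ : Fin 1 => X 0) := by
    funext i; exact congrArg X (Subsingleton.elim _ _)
  rw [e1, e2]
  simp

lemma sigmaBar_alphaStar_const (σ : R →ₐ[ℝ] R) (hσ : ∀ f : R, σ (σ f) = f)
    (α : g → g) (c : R) :
    sigmaBar ⇑σ (alphaStar ⇑σ α (fun _ : Fin 0 → g => c)) = fun _ => c := by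
  funext X
  simp [sigmaBar, alphaStar, hσ]

/-- Leibniz rule for `d^s` on 0-cochains. -/
lemma D0_mul (σ : R →ₐ[ℝ] R) (S : SuffData R σ g) (s : ℕ) (f h : R) (W : Fin 1 → g) :
    S.D s 0 (fun _ => f * h) W =
      S.D s 0 (fun _ => f) W * h + f * S.D s 0 (fun _ => h) W := by
  have hw := S.D_wedge s 0 0 (fun _ => f) (fun _ => h) (isAltML_fin0 _) (isAltML_fin0 _)
  have hwfh : wedge (fun _ : Fin 0 → g => f) (fun _ : Fin 0 → g => h) =
      fun _ : Fin 0 → g => f * h := by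
    funext X
    exact wedge00 _ _ X
  rw [hwfh, sigmaBar_alphaStar_const σ S.σ_invol, sigmaBar_alphaStar_const σ S.σ_invol] at hw
  have := congrFun hw W
  simp only [reind, Pi.add_apply, Pi.smul_apply, pow_zero, one_smul] at this
  rw [wedge10 _ _ _ (fun i => i.elim0), wedge01 _ _ _ (fun i => i.elim0)] at this
  rw [this]
  have e1 : (fun _ : Fin 1 => W (Fin.cast (by omega : 0 + 1 + 0 = 0 + 0 + 1) 0)) = W := by
    funext i; exact congrArg W (Subsingleton.elim _ _)
  rw [e1]
  rfl

lemma rho_mul (σ : R →ₐ[ℝ] R) (S : SuffData R σ g) (X : g) (f h : R) :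
    S.rho X (f * h) = S.rho X f * σ h + σ f * S.rho X h := by
  unfold SuffData.rho
  rw [D0_mul σ S 0 f h (fun _ => X)]
  rw [map_add, map_mul, map_mul]

lemma rho_smul (σ : R →ₐ[ℝ] R) (S : SuffData R σ g) (f : R) (Y : g) (h : R) :
    S.rho (f • Y) h = σ f * S.rho Y h := by
  unfold SuffData.rho
  rw [S.D_iv h f Y, map_mul]

end Aux

/-- sufficiency, equation (s37) for Definition-1.3, Hom-Leibniz:
`[X,f•Y] = σ(f)•[X,Y] + ρ(X)(f)•α(Y)`. -/
theorem stmt14 (σ : R →ₐ[ℝ] R) (S : SuffData R σ g)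
    (br : g → g → g)
    (hbr_skew : ∀ X Y : g, br X Y = - br Y X)
    (hbr_add_left : ∀ X Y Z : g, br (X + Y) Z = br X Z + br Y Z)
    (hbr_smul_left : ∀ (r : ℝ) (X Y : g), br (r • X) Y = r • br X Y)
    (hbr_def : ∀ (ξ : (Fin 1 → g) → R), IsAltML ξ → IsRLinear ξ → ∀ X Y : g,
        ξ (fun _ => br X Y) =
          S.rho X (σ (ξ fun _ => S.α Y)) - S.rho Y (σ (ξ fun _ => S.α X)) - S.D 0 1 ξ ![X, Y])
    (hsep : ∀ X : g,
        (∀ (ξ : (Fin 1 → g) → R), IsAltML ξ → IsRLinear ξ → ξ (fun _ => X) = 0) → X = 0) :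
    ∀ (X Y : g) (f : R),
      br X (f • Y) = σ f • br X Y + S.rho X f • S.α Y := by
  intro X Y f
  apply sub_eq_zero.mp
  refine hsep _ (fun ξ hA hR => ?_)
  have hDA : IsAltML (S.D 0 1 ξ) := S.D_alt 0 1 ξ hA
  have e1 := hbr_def ξ hA hR X (f • Y)
  have e2 := hbr_def ξ hA hR X Y
  have hα : ξ (fun _ => S.α (f • Y)) = σ f * ξ (fun _ => S.α Y) := by
    rw [S.α_smul, rlin1 hR]
  have hσα : σ (ξ fun _ => S.α (f • Y)) = f * σ (ξ fun _ => S.α Y) := by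
    rw [hα, map_mul, S.σ_invol]
  have hρ1 : S.rho X (f * σ (ξ fun _ => S.α Y)) =
      S.rho X f * ξ (fun _ => S.α Y) + σ f * S.rho X (σ (ξ fun _ => S.α Y)) := by
    rw [rho_mul σ S, S.σ_invol]
  have hρ2 : S.rho (f • Y) (σ (ξ fun _ => S.α X)) = σ f * S.rho Y (σ (ξ fun _ => S.α X)) :=
    rho_smul σ S f Y _
  have hD : S.D 0 1 ξ ![X, f • Y] = σ f * S.D 0 1 ξ ![X, Y] := by
    rw [alt2_swap hDA, S.D_v ξ hA hR f Y X, alt2_swap hDA Y X]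
    ring
  have key : ξ (fun _ => br X (f • Y)) =
      σ f * ξ (fun _ => br X Y) + S.rho X f * ξ (fun _ => S.α Y) := by
    rw [e1, hσα, hρ1, hρ2, hD, e2]; ring
  rw [alt1_sub hA, alt1_add hA, rlin1 hR, rlin1 hR, key]
  ring
end
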